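/- Let R > 0 and y ∈ ℝ³ with 0 < ‖y‖ < R, set ȳ = (R²/‖y‖²) y, and define 𝒢(x, y) = 1/(4π‖x − y‖) + (‖x‖² + ‖y‖²)/(8πR³) + R/(4π‖y‖·‖x − ȳ‖) + (1/(4πR)) log(2R²/(R² − ⟨x, y⟩ + ‖y‖·‖x − ȳ‖)). Then the Neumann boundary condition holds on the sphere of radius R: for every x with ‖x‖ = R, the radial derivative vanishes, i.e. ⟨x, ∇_x 𝒢(x, y)⟩ = 0. -/

import Mathlib

/-! On the sphere `‖x‖ = R` the point `x` is fixed by the inversion that sends `y` to `ȳ`, so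
`‖x - ȳ‖ = (R / ‖y‖) ‖x - y‖`. With this, the radial derivatives of the two Newtonian terms add
up to `-1 / (4π‖x - y‖)`, and the radial derivative of the logarithmic term is exactly what is
needed to cancel this together with the `1 / (4πR)` coming from the quadratic term. -/

open Real
open scoped RealInnerProductSpace

/-- The Neumann function of the ball `B_R ⊆ ℝ³`, written out explicitly:
`𝒢(x, y) = 1/(4π‖x − y‖) + (‖x‖² + ‖y‖²)/(8πR³) + R/(4π‖y‖‖x − ȳ‖)
  + (1/(4πR)) log(2R²/(R² − ⟨x,y⟩ + ‖y‖‖x − ȳ‖))`, where `ȳ = (R²/‖y‖²) y`. -/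
noncomputable def Gneu (R : ℝ) (x y : EuclideanSpace ℝ (Fin 3)) : ℝ :=
  1 / (4 * π * ‖x - y‖) + (‖x‖ ^ 2 + ‖y‖ ^ 2) / (8 * π * R ^ 3)
    + R / (4 * π * ‖y‖ * ‖x - (R ^ 2 / ‖y‖ ^ 2) • y‖)
    + (1 / (4 * π * R)) *
        Real.log (2 * R ^ 2 / (R ^ 2 - ⟪x, y⟫ + ‖y‖ * ‖x - (R ^ 2 / ‖y‖ ^ 2) • y‖))

section InnerProductSpace

variable {E : Type*} [NormedAddCommGroup E] [InnerProductSpace ℝ E]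

theorem hasFDerivAt_norm_sub {a x : E} (h : x ≠ a) :
    HasFDerivAt (fun w => ‖w - a‖) (‖x - a‖⁻¹ • innerSL ℝ (x - a)) x := by
  have hpos : 0 < ‖x - a‖ := norm_pos_iff.mpr (sub_ne_zero.mpr h)
  have hsq : HasFDerivAt (fun w => ‖w - a‖ ^ 2) (2 • innerSL ℝ (x - a)) x := by
    simpa using ((hasFDerivAt_id x).sub_const a).norm_sq
  have hsqrt := (hasDerivAt_sqrt (pow_pos hpos 2).ne').comp_hasFDerivAt x hsq
  simp only [Function.comp_def, sqrt_sq (norm_nonneg _)] at hsqrt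
  refine hsqrt.congr_fderiv ?_
  rw [← Nat.cast_smul_eq_nsmul ℝ, Nat.cast_ofNat, smul_smul]
  congr 1
  field_simp

theorem hasFDerivAt_div_mul_norm_sub {a x : E} (c k : ℝ) (h : x ≠ a) :
    HasFDerivAt (fun w => c / (k * ‖w - a‖))
      ((-(c / k) / ‖x - a‖ ^ 3) • innerSL ℝ (x - a)) x := by
  have hpos : 0 < ‖x - a‖ := norm_pos_iff.mpr (sub_ne_zero.mpr h)
  have hinv := ((hasDerivAt_inv hpos.ne').comp_hasFDerivAt x (hasFDerivAt_norm_sub h)).const_mul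
    (c / k)
  simp only [Function.comp_def, ← div_eq_mul_inv, ← div_mul_eq_div_div] at hinv
  refine hinv.congr_fderiv ?_
  simp only [smul_smul]
  congr 1
  field_simp

theorem norm_sub_div_norm_sq_smul_of_norm_eq {x y : E} {R : ℝ} (hR : R ≠ 0) (hx : ‖x‖ = R)
    (hy : y ≠ 0) : ‖x - (R ^ 2 / ‖y‖ ^ 2) • y‖ = R / ‖y‖ * ‖x - y‖ := by
  have hx0 : x ≠ 0 := by rintro rfl; exact hR (by simpa using hx.symm)
  have h := dist_div_norm_sq_smul hx0 hy R
  rw [hx, div_self hR, one_pow, one_smul, div_pow, dist_eq_norm, dist_eq_norm] at h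
  rw [h, sq, mul_div_mul_left _ _ hR]

end InnerProductSpace

theorem hasDerivAt_log_const_div {k t : ℝ} (hk : k ≠ 0) (ht : t ≠ 0) :
    HasDerivAt (fun s => log (k / s)) (-t⁻¹) t := by
  have h := ((hasDerivAt_inv ht).const_mul k).log (by simpa using And.intro hk ht)
  simp only [← div_eq_mul_inv] at h
  convert h using 1
  field_simp

theorem fderiv_Gneu_apply_self {R : ℝ} {x y y' : EuclideanSpace ℝ (Fin 3)}
    (hy' : y' = (R ^ 2 / ‖y‖ ^ 2) • y) (hR : R ≠ 0) (hxy : x ≠ y) (hxy' : x ≠ y')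
    (hD : R ^ 2 - ⟪x, y⟫ + ‖y‖ * ‖x - y'‖ ≠ 0) :
    fderiv ℝ (fun x => Gneu R x y) x x =
      -⟪x - y, x⟫ / (4 * π * ‖x - y‖ ^ 3) + ‖x‖ ^ 2 / (4 * π * R ^ 3)
        - R * ⟪x - y', x⟫ / (4 * π * ‖y‖ * ‖x - y'‖ ^ 3)
        - (‖y‖ * ⟪x - y', x⟫ / ‖x - y'‖ - ⟪y, x⟫)
          / (4 * π * R * (R ^ 2 - ⟪x, y⟫ + ‖y‖ * ‖x - y'‖)) := by
  subst hy'
  have hinner : HasFDerivAt (fun w : EuclideanSpace ℝ (Fin 3) => ⟪w, y⟫) (innerSL ℝ y) x :=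
    (innerSL ℝ y).hasFDerivAt.congr_of_eventuallyEq (.of_forall fun w => real_inner_comm y w)
  have hquadratic : HasFDerivAt (fun w => (‖w‖ ^ 2 + ‖y‖ ^ 2) / (8 * π * R ^ 3))
      ((1 / (8 * π * R ^ 3)) • 2 • innerSL ℝ x) x := by
    exact ((hasDerivAt_id _).add_const _).div_const _ |>.comp_hasFDerivAt x
      (hasStrictFDerivAt_norm_sq x).hasFDerivAt
  have hlog := ((hasDerivAt_log_const_div (k := 2 * R ^ 2) (by positivity) hD).comp_hasFDerivAt
    x (((hasFDerivAt_const (R ^ 2) x).sub hinner).add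
      ((hasFDerivAt_norm_sub hxy').const_mul ‖y‖))).const_mul (1 / (4 * π * R))
  have hG : HasFDerivAt (fun x => Gneu R x y) _ x :=
    (((hasFDerivAt_div_mul_norm_sub 1 (4 * π) hxy).add hquadratic).add
      (hasFDerivAt_div_mul_norm_sub R (4 * π * ‖y‖) hxy')).add hlog
  have hr : ‖x - y‖ ≠ 0 := norm_ne_zero_iff.mpr (sub_ne_zero.mpr hxy)
  have hr' : ‖x - (R ^ 2 / ‖y‖ ^ 2) • y‖ ≠ 0 := norm_ne_zero_iff.mpr (sub_ne_zero.mpr hxy')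
  rw [hG.fderiv]
  simp only [add_apply, smul_apply, sub_apply, zero_apply, innerSL_apply_apply, smul_eq_mul,
    nsmul_eq_mul, Nat.cast_ofNat, real_inner_self_eq_norm_sq]
  field_simp
  ring

theorem neumann_boundary_condition_general (R : ℝ)
    (y : EuclideanSpace ℝ (Fin 3)) (hy0 : 0 < ‖y‖) (hyR : ‖y‖ < R)
    (x : EuclideanSpace ℝ (Fin 3)) (hx : ‖x‖ = R) :
    ⟪x, gradient (fun x => Gneu R x y) x⟫ = 0 := by
  set y' := (R ^ 2 / ‖y‖ ^ 2) • y
  have hR : 0 < R := hy0.trans hyR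
  have hxy : x ≠ y := by rintro rfl; exact hyR.ne hx
  have hr : 0 < ‖x - y‖ := norm_pos_iff.mpr (sub_ne_zero.mpr hxy)
  have himage : ‖x - y'‖ = R / ‖y‖ * ‖x - y‖ :=
    norm_sub_div_norm_sq_smul_of_norm_eq hR.ne' hx (norm_pos_iff.mp hy0)
  have hxy' : x ≠ y' := by
    rw [← sub_ne_zero, ← norm_ne_zero_iff, himage]
    positivity
  have hDρ : ‖y‖ * ‖x - y'‖ = R * ‖x - y‖ := by
    rw [himage, ← mul_assoc, mul_div_cancel₀ _ hy0.ne']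
  have hD : 0 < R ^ 2 - ⟪x, y⟫ + R * ‖x - y‖ := by
    have hCS : ⟪x, y⟫ ≤ R * ‖y‖ := hx ▸ real_inner_le_norm x y
    nlinarith
  have hr2 : ‖x - y‖ ^ 2 = R ^ 2 - 2 * ⟪x, y⟫ + ‖y‖ ^ 2 := by rw [norm_sub_sq_real, hx]
  have hy'x : ⟪y', x⟫ = R ^ 2 / ‖y‖ ^ 2 * ⟪x, y⟫ := by
    rw [real_inner_smul_left, real_inner_comm]
  rw [real_inner_comm, inner_gradient_left,
    fderiv_Gneu_apply_self (y' := y') rfl hR.ne' hxy hxy' (by rw [hDρ]; exact hD.ne')]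
  simp only [inner_sub_left, real_inner_self_eq_norm_sq, hx, real_inner_comm x y, hy'x]
  rw [hDρ, himage]
  generalize hD_def : R ^ 2 - ⟪x, y⟫ + R * ‖x - y‖ = D at hD ⊢
  field_simp
  linear_combination R * (D + ‖x - y‖ ^ 2) * hr2 - ‖x - y‖ ^ 2 * (‖x - y‖ - R) * hD_def

/-- The Neumann boundary condition for the Neumann function of the ball: for
`0 < ‖y‖ < R` and every boundary point `x` with `‖x‖ = R`, the radial (outward normal)
derivative vanishes, i.e. `⟨x, ∇_x 𝒢(x, y)⟩ = 0`. -/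
theorem neumann_boundary_condition (R : ℝ) (hR : 0 < R)
    (y : EuclideanSpace ℝ (Fin 3)) (hy0 : 0 < ‖y‖) (hyR : ‖y‖ < R)
    (x : EuclideanSpace ℝ (Fin 3)) (hx : ‖x‖ = R) :
    ⟪x, gradient (fun x => Gneu R x y) x⟫ = 0 :=
  neumann_boundary_condition_general R y hy0 hyR x hx
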